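/- Let (X_t)_{t≥0} satisfy (cov), (LR), and (CV), suppose E(|X_t|^p) < ∞ for all t ≥ 0 and p > 0, suppose 1, X_t, X_t² are linearly independent for all t > 0, and suppose there exist θ ∈ ℝ and τ ≥ 0 such that for all 0 < s < t, almost surely E(X_s² | F_{≥t}) = (s(s+τ)/(t(t+τ))) X_t² + (s(t−s)θ/(t(t+τ))) X_t + s(t−s)/(t+τ). Then E(X_t³) = t·θ for all t ≥ 0, and there exists q ∈ (−1,1] such that for all 0 ≤ s < t: E(X_t⁴) = (1+q)·t(t+τ) + t(t+θ²), E((X_t−X_s)²) = t−s, E((X_t−X_s)³) = θ(t−s), and E((X_t−X_s)⁴) = (t−s)·(6s + θ² − τ + (2+q)(t+τ−3s)). -/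

import Mathlib

open MeasureTheory

noncomputable section

/-- The σ-field generated by the process `X` on the time interval `[0, s]`. -/
def sigmaLE {Ω : Type*} [MeasurableSpace Ω] {E : Type*} [MeasurableSpace E]
    (X : ℝ → Ω → E) (s : ℝ) : MeasurableSpace Ω :=
  ⨆ r ∈ Set.Icc (0:ℝ) s, MeasurableSpace.comap (X r) inferInstance

/-- The σ-field generated by the process `X` on the time interval `[u, ∞)`. -/
def sigmaGE {Ω : Type*} [MeasurableSpace Ω] {E : Type*} [MeasurableSpace E]
    (X : ℝ → Ω → E) (u : ℝ) : MeasurableSpace Ω :=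
  ⨆ r ∈ Set.Ici u, MeasurableSpace.comap (X r) inferInstance

/-- The conditional variance `Var(f | m) = E(f² | m) − (E(f | m))²`. -/
def condVar {Ω : Type*} [MeasurableSpace Ω] (μ : Measure Ω) (m : MeasurableSpace Ω)
    (f : Ω → ℝ) : Ω → ℝ :=
  fun ω => (μ[fun ω' => (f ω') ^ 2 | m]) ω - ((μ[f | m]) ω) ^ 2

/-- `1, f, f²` are linearly independent: no nontrivial real linear combination of them
vanishes almost surely. -/
def LinIndep123 {Ω : Type*} [MeasurableSpace Ω] (μ : Measure Ω) (f : Ω → ℝ) : Prop :=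
  ∀ c₀ c₁ c₂ : ℝ, (fun ω => c₀ + c₁ * f ω + c₂ * (f ω) ^ 2) =ᵐ[μ] (fun _ => 0) →
    c₀ = 0 ∧ c₁ = 0 ∧ c₂ = 0

/-!
Pairing each conditional-moment hypothesis with powers of the conditioning variables turns it
into linear relations between the mixed moments `E[X_s^i X_t^j]`; for `s < t`, (LR) and (cov) yield
`E[X_s^k X_t] = E[X_s^(k+1)]` and `t E[X_t^k X_s] = s E[X_t^(k+1)]`. Combined with (CV) and the
backward regression, this makes `E[X_t³] / t` constant, equal to `θ`, and
`(E[X_t⁴] - t (t + θ²)) / (t (t + τ))` constant, which defines `1 + q`. Then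
`E[(X_1² - θ X_1 - 1)²] = (1 + q)(1 + τ)` is positive by linear independence, and
`E[(X_{s+1} - X_s)⁴] = 2 (1 - q) s + O(1) ≥ 0` for all `s` forces `q ≤ 1`.
-/

open MeasureTheory Filter Topology

section Integrability

variable {Ω : Type*} [MeasurableSpace Ω] {μ : Measure Ω}

lemma integrable_pow_of_integrable_abs_rpow [IsFiniteMeasure μ] {f : Ω → ℝ}
    (hf : AEStronglyMeasurable f μ) (h : ∀ p : ℝ, 0 < p → Integrable (fun ω => |f ω| ^ p) μ)
    (n : ℕ) : Integrable (fun ω => f ω ^ n) μ := by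
  rcases n.eq_zero_or_pos with rfl | hn
  · simp
  · refine (integrable_norm_iff (hf.pow n)).mp ?_
    simpa [Real.rpow_natCast] using h n (by exact_mod_cast hn)

lemma integrable_pow_mul_pow {f g : Ω → ℝ} (hf : ∀ n : ℕ, Integrable (fun ω => f ω ^ n) μ)
    (hg : ∀ n : ℕ, Integrable (fun ω => g ω ^ n) μ) (i j : ℕ) :
    Integrable (fun ω => f ω ^ i * g ω ^ j) μ := by
  refine ((hf (2 * i)).add (hg (2 * j))).mono' ((hf i).1.mul (hg j).1) (ae_of_all _ fun ω => ?_)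
  have := two_mul_le_add_sq |f ω ^ i| |g ω ^ j|
  rw [sq_abs, sq_abs] at this
  rw [Pi.add_apply, Real.norm_eq_abs, abs_mul, pow_mul', pow_mul']
  linarith [mul_nonneg (abs_nonneg (f ω ^ i)) (abs_nonneg (g ω ^ j))]

lemma integral_sq_pos_of_linIndep123 [IsFiniteMeasure μ] {f : Ω → ℝ} (hf : LinIndep123 μ f)
    (hf_int : ∀ n : ℕ, Integrable (fun ω => f ω ^ n) μ) (b c : ℝ) :
    0 < ∫ ω, (f ω ^ 2 - b * f ω - c) ^ 2 ∂μ := by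
  have := hf_int 4
  have := hf_int 3
  have := hf_int 2
  have : Integrable f μ := by simpa using hf_int 1
  have hint : Integrable (fun ω => (f ω ^ 2 - b * f ω - c) ^ 2) μ :=
    (by fun_prop : Integrable (fun ω => f ω ^ 4 - 2 * b * f ω ^ 3 + (b ^ 2 - 2 * c) * f ω ^ 2 +
      2 * b * c * f ω + c ^ 2) μ).congr (ae_of_all _ fun ω => by ring)
  refine (integral_nonneg fun ω => sq_nonneg _).lt_of_ne fun h => ?_
  have hae := (integral_eq_zero_iff_of_nonneg (fun ω => sq_nonneg _) hint).mp h.symm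
  have := hf (-c) (-b) 1 (by
    filter_upwards [hae] with ω hω
    linear_combination pow_eq_zero_iff two_ne_zero |>.mp hω)
  exact one_ne_zero this.2.2

end Integrability

lemma integral_mul_eq_of_condExp_ae_eq {Ω : Type*} {m m₀ : MeasurableSpace Ω} {μ : Measure Ω}
    [IsFiniteMeasure μ] (hm : m ≤ m₀) {w f g : Ω → ℝ} (hw : StronglyMeasurable[m] w)
    (hf : Integrable f μ) (hwf : Integrable (fun ω => w ω * f ω) μ) (hfg : μ[f | m] =ᵐ[μ] g) :
    ∫ ω, w ω * f ω ∂μ = ∫ ω, w ω * g ω ∂μ :=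
  calc ∫ ω, w ω * f ω ∂μ = ∫ ω, (μ[fun ω => w ω * f ω | m]) ω ∂μ := (integral_condExp hm).symm
    _ = ∫ ω, w ω * g ω ∂μ := by
      refine integral_congr_ae ?_
      filter_upwards [condExp_mul_of_stronglyMeasurable_left hw hwf hf, hfg] with ω h1 h2
      exact h1.trans (by rw [Pi.mul_apply, h2])

lemma eq_zero_of_abs_mul_add_le_sqrt {m c D : ℝ} (h : ∀ᶠ u in atTop, |m * u + c| ≤ D * √u) :
    m = 0 := by
  have h_lim : Tendsto (fun u => (m * u + c) / u) atTop (𝓝 m) := by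
    have : Tendsto (fun u : ℝ => m + c * u⁻¹) atTop (𝓝 (m + c * 0)) :=
      tendsto_const_nhds.add (tendsto_inv_atTop_zero.const_mul c)
    rw [mul_zero, add_zero] at this
    refine this.congr' ?_
    filter_upwards [eventually_gt_atTop 0] with u hu
    field_simp
  have h_zero : Tendsto (fun u => (m * u + c) / u) atTop (𝓝 0) := by
    refine squeeze_zero_norm' ?_ (tendsto_const_nhds.div_atTop Real.tendsto_sqrt_atTop (a := D))
    filter_upwards [h, eventually_gt_atTop 0] with u hu hu0
    have hsqrt : 0 < √u := Real.sqrt_pos.mpr hu0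
    rw [Real.norm_eq_abs, abs_div, abs_of_pos hu0, div_le_div_iff₀ hu0 hsqrt]
    calc |m * u + c| * √u ≤ D * √u * √u := by gcongr
      _ = D * u := by rw [mul_assoc, Real.mul_self_sqrt hu0.le]
  exact tendsto_nhds_unique h_lim h_zero

lemma nonneg_of_forall_nonneg_mul_add {m c : ℝ} (h : ∀ s : ℝ, 0 ≤ s → 0 ≤ m * s + c) :
    0 ≤ m := by
  by_contra! hm
  have := h ((|c| + 1) / -m) (div_nonneg (by positivity) (by linarith))
  rw [mul_div_assoc', div_neg, mul_comm, mul_div_assoc, div_self hm.ne, mul_one] at this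
  linarith [le_abs_self c]

lemma abs_mul_le_of_pos {a b c : ℝ} (hc : 0 < c) : |a * b| ≤ (c * a ^ 2 + b ^ 2 / c) / 2 := by
  have hb : b ^ 2 / c * c = b ^ 2 := div_mul_cancel₀ _ hc.ne'
  have key : 0 ≤ (c * |a| - |b|) ^ 2 := sq_nonneg _
  rw [sub_sq, mul_pow, sq_abs, sq_abs] at key
  rw [abs_mul, le_div_iff₀ two_pos]
  refine le_of_mul_le_mul_right ?_ hc
  rw [add_mul, hb]
  linarith

section Moments

variable {Ω : Type*} [mΩ : MeasurableSpace Ω] {μ : Measure Ω} {X : ℝ → Ω → ℝ}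

def HasFiniteMoments (μ : Measure Ω) (X : ℝ → Ω → ℝ) : Prop :=
  ∀ t, 0 ≤ t → ∀ n : ℕ, Integrable (fun ω => X t ω ^ n) μ

def HasMinCovariance (μ : Measure Ω) (X : ℝ → Ω → ℝ) : Prop :=
  ∀ s t : ℝ, 0 ≤ s → 0 ≤ t → ∫ ω, X t ω * X s ω ∂μ = min t s

def HasLinearRegression (μ : Measure Ω) (X : ℝ → Ω → ℝ) (a b : ℝ → ℝ → ℝ → ℝ) : Prop :=
  ∀ s t u : ℝ, 0 ≤ s → s < t → t < u →
    μ[X t | sigmaLE X s ⊔ sigmaGE X u] =ᵐ[μ] fun ω => a s t u * X s ω + b s t u * X u ω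

def HasQuadraticConditionalVariance (μ : Measure Ω) (X : ℝ → Ω → ℝ) : Prop :=
  ∀ s t : ℝ, 0 ≤ s → s ≤ t →
    μ[fun ω => (X t ω) ^ 2 | sigmaLE X s] =ᵐ[μ] fun ω => (X s ω) ^ 2 + t - s

def HasQuadraticBackwardRegression (μ : Measure Ω) (X : ℝ → Ω → ℝ) (θ τ : ℝ) : Prop :=
  ∀ s t : ℝ, 0 < s → s < t →
    μ[fun ω => (X s ω) ^ 2 | sigmaGE X t] =ᵐ[μ]
      fun ω => s * (s + τ) / (t * (t + τ)) * (X t ω) ^ 2 +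
        s * (t - s) * θ / (t * (t + τ)) * X t ω + s * (t - s) / (t + τ)

lemma HasFiniteMoments.integrable_pow_mul_pow (hX : HasFiniteMoments μ X) {s t : ℝ}
    (hs : 0 ≤ s) (ht : 0 ≤ t) (i j : ℕ) : Integrable (fun ω => X s ω ^ i * X t ω ^ j) μ :=
  _root_.integrable_pow_mul_pow (hX s hs) (hX t ht) i j

lemma HasFiniteMoments.integrable_pow_mul (hX : HasFiniteMoments μ X) {s t : ℝ}
    (hs : 0 ≤ s) (ht : 0 ≤ t) (k : ℕ) : Integrable (fun ω => X s ω ^ k * X t ω) μ := by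
  simpa using hX.integrable_pow_mul_pow hs ht k 1

lemma sigmaLE_le (hmeas : ∀ t, Measurable (X t)) (s : ℝ) : sigmaLE X s ≤ mΩ :=
  iSup₂_le fun r _ => (hmeas r).comap_le

lemma sigmaGE_le (hmeas : ∀ t, Measurable (X t)) (u : ℝ) : sigmaGE X u ≤ mΩ :=
  iSup₂_le fun r _ => (hmeas r).comap_le

lemma measurable_sigmaLE {s r : ℝ} (hr : 0 ≤ r) (hrs : r ≤ s) : Measurable[sigmaLE X s] (X r) :=
  measurable_iff_comap_le.mpr
    (le_iSup₂ (f := fun r _ => MeasurableSpace.comap (X r) inferInstance) r ⟨hr, hrs⟩)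

lemma measurable_sigmaGE {u r : ℝ} (hur : u ≤ r) : Measurable[sigmaGE X u] (X r) :=
  measurable_iff_comap_le.mpr
    (le_iSup₂ (f := fun r _ => MeasurableSpace.comap (X r) inferInstance) r hur)

lemma integral_sq_of_covariance (hcov : HasMinCovariance μ X) {t : ℝ} (ht : 0 ≤ t) :
    ∫ ω, X t ω ^ 2 ∂μ = t := by
  simpa [sq] using hcov t t ht ht

lemma abs_integral_pow_mul_le (hX : HasFiniteMoments μ X) (hcov : HasMinCovariance μ X)
    {s u : ℝ} (hs : 0 ≤ s) (hu : 0 < u) (k : ℕ) :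
    |∫ ω, X s ω ^ k * X u ω ∂μ| ≤ (∫ ω, X s ω ^ (2 * k) ∂μ + 1) / 2 * √u := by
  have hsqrt : 0 < √u := Real.sqrt_pos.mpr hu
  have := hX s hs (2 * k)
  have := hX u hu.le 2
  calc |∫ ω, X s ω ^ k * X u ω ∂μ| ≤ ∫ ω, |X s ω ^ k * X u ω| ∂μ :=
        abs_integral_le_integral_abs
    _ ≤ ∫ ω, (√u * X s ω ^ (2 * k) + X u ω ^ 2 / √u) / 2 ∂μ := by
        refine integral_mono (hX.integrable_pow_mul hs hu.le k).abs (by fun_prop) fun ω => ?_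
        simpa only [← pow_mul'] using abs_mul_le_of_pos (a := X s ω ^ k) (b := X u ω) hsqrt
    _ = (∫ ω, X s ω ^ (2 * k) ∂μ + 1) / 2 * √u := by
        rw [integral_div, integral_add (by fun_prop) (by fun_prop), integral_const_mul,
          integral_div, integral_sq_of_covariance hcov hu.le, Real.div_sqrt]
        ring

lemma integral_sub_sq (hX : HasFiniteMoments μ X) (hcov : HasMinCovariance μ X)
    {s t : ℝ} (hs : 0 ≤ s) (hst : s ≤ t) : ∫ ω, (X t ω - X s ω) ^ 2 ∂μ = t - s := by
  have ht := hs.trans hst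
  have := hX t ht 2
  have := hX s hs 2
  have : Integrable (fun ω => X t ω * X s ω) μ := by simpa using hX.integrable_pow_mul ht hs 1
  calc ∫ ω, (X t ω - X s ω) ^ 2 ∂μ
      = ∫ ω, (X t ω ^ 2 - 2 * (X t ω * X s ω) + X s ω ^ 2) ∂μ := by congr 1 with ω; ring
    _ = ∫ ω, X t ω ^ 2 ∂μ - 2 * ∫ ω, X t ω * X s ω ∂μ + ∫ ω, X s ω ^ 2 ∂μ := by
      rw [integral_add (by fun_prop) (by fun_prop), integral_sub (by fun_prop) (by fun_prop),
        integral_const_mul]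
    _ = t - s := by
      rw [hcov s t hs ht, min_eq_right hst, integral_sq_of_covariance hcov ht,
        integral_sq_of_covariance hcov hs]
      ring

lemma integral_sq_sub_mul_sub [IsProbabilityMeasure μ] (hX : HasFiniteMoments μ X)
    (hmean : ∀ t : ℝ, 0 ≤ t → ∫ ω, X t ω ∂μ = 0)
    (hcov : HasMinCovariance μ X) {θ τ q : ℝ}
    (h3 : ∀ t : ℝ, 0 ≤ t → ∫ ω, X t ω ^ 3 ∂μ = t * θ)
    (h4 : ∀ t : ℝ, 0 ≤ t → ∫ ω, X t ω ^ 4 ∂μ = (1 + q) * t * (t + τ) + t * (t + θ ^ 2))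
    {t : ℝ} (ht : 0 ≤ t) :
    ∫ ω, (X t ω ^ 2 - θ * X t ω - t) ^ 2 ∂μ = (1 + q) * t * (t + τ) := by
  have := hX t ht 4
  have := hX t ht 3
  have := hX t ht 2
  have : Integrable (X t) μ := by simpa using hX t ht 1
  calc ∫ ω, (X t ω ^ 2 - θ * X t ω - t) ^ 2 ∂μ
      = ∫ ω, (X t ω ^ 4 - 2 * θ * X t ω ^ 3 + (θ ^ 2 - 2 * t) * X t ω ^ 2 +
          2 * θ * t * X t ω + t ^ 2) ∂μ := by congr 1 with ω; ring
    _ = ∫ ω, X t ω ^ 4 ∂μ - 2 * θ * ∫ ω, X t ω ^ 3 ∂μ +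
          (θ ^ 2 - 2 * t) * ∫ ω, X t ω ^ 2 ∂μ + 2 * θ * t * ∫ ω, X t ω ∂μ + t ^ 2 := by
        rw [integral_add (by fun_prop) (by fun_prop), integral_add (by fun_prop) (by fun_prop),
          integral_add (by fun_prop) (by fun_prop), integral_sub (by fun_prop) (by fun_prop),
          integral_const_mul, integral_const_mul, integral_const_mul, integral_const]
        simp
    _ = (1 + q) * t * (t + τ) := by
        rw [h4 t ht, h3 t ht, integral_sq_of_covariance hcov ht, hmean t ht]
        ring

variable [IsFiniteMeasure μ]

lemma integral_pow_mul_sq_of_conditionalVariance (hmeas : ∀ t, Measurable (X t))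
    (hX : HasFiniteMoments μ X) (hCV : HasQuadraticConditionalVariance μ X) {s t : ℝ}
    (hs : 0 ≤ s) (hst : s ≤ t) (k : ℕ) :
    ∫ ω, X s ω ^ k * X t ω ^ 2 ∂μ = ∫ ω, X s ω ^ (k + 2) ∂μ + (t - s) * ∫ ω, X s ω ^ k ∂μ := by
  have ht := hs.trans hst
  rw [integral_mul_eq_of_condExp_ae_eq (sigmaLE_le hmeas s)
      ((measurable_sigmaLE hs le_rfl).pow_const k).stronglyMeasurable (hX t ht 2)
      (hX.integrable_pow_mul_pow hs ht k 2) (hCV s t hs hst),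
    ← integral_const_mul, ← integral_add (hX s hs _) ((hX s hs k).const_mul _)]
  congr 1 with ω
  ring

lemma integral_pow_mul_sq_of_backwardRegression (hmeas : ∀ t, Measurable (X t))
    (hX : HasFiniteMoments μ X) {θ τ : ℝ} (hfut : HasQuadraticBackwardRegression μ X θ τ)
    {s t : ℝ} (hs : 0 < s) (hst : s < t) (k : ℕ) :
    ∫ ω, X t ω ^ k * X s ω ^ 2 ∂μ =
      s * (s + τ) / (t * (t + τ)) * ∫ ω, X t ω ^ (k + 2) ∂μ +
        s * (t - s) * θ / (t * (t + τ)) * ∫ ω, X t ω ^ (k + 1) ∂μ +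
          s * (t - s) / (t + τ) * ∫ ω, X t ω ^ k ∂μ := by
  have ht := hs.le.trans hst.le
  have := hX t ht
  rw [integral_mul_eq_of_condExp_ae_eq (sigmaGE_le hmeas t)
      ((measurable_sigmaGE le_rfl).pow_const k).stronglyMeasurable (hX s hs.le 2)
      (hX.integrable_pow_mul_pow ht hs.le k 2) (hfut s t hs hst),
    ← integral_const_mul, ← integral_const_mul, ← integral_const_mul,
    ← integral_add (by fun_prop) (by fun_prop), ← integral_add (by fun_prop) (by fun_prop)]
  congr 1 with ω
  ring

lemma integral_pow_mul_eq_of_linearRegression (hmeas : ∀ t, Measurable (X t))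
    (hX : HasFiniteMoments μ X) {a b : ℝ → ℝ → ℝ → ℝ} (hLR : HasLinearRegression μ X a b)
    {s t u r : ℝ} (hs : 0 ≤ s) (hst : s < t) (htu : t < u) (hr : r = s ∨ r = u) (k : ℕ) :
    ∫ ω, X r ω ^ k * X t ω ∂μ =
      a s t u * ∫ ω, X r ω ^ k * X s ω ∂μ + b s t u * ∫ ω, X r ω ^ k * X u ω ∂μ := by
  have ht := hs.trans hst.le
  have hu := ht.trans htu.le
  have hr0 : 0 ≤ r := by rcases hr with rfl | rfl <;> assumption
  have hw : Measurable[sigmaLE X s ⊔ sigmaGE X u] (X r) := by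
    rcases hr with rfl | rfl
    · exact (measurable_sigmaLE hs le_rfl).mono le_sup_left le_rfl
    · exact (measurable_sigmaGE le_rfl).mono le_sup_right le_rfl
  have := hX.integrable_pow_mul hr0 hs k
  have := hX.integrable_pow_mul hr0 hu k
  rw [integral_mul_eq_of_condExp_ae_eq (sup_le (sigmaLE_le hmeas s) (sigmaGE_le hmeas u))
      (hw.pow_const k).stronglyMeasurable (by simpa using hX t ht 1)
      (hX.integrable_pow_mul hr0 ht k) (hLR s t u hs hst htu),
    ← integral_const_mul, ← integral_const_mul, ← integral_add (by fun_prop) (by fun_prop)]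
  congr 1 with ω
  ring

/-- For `0 < s` the covariances force `a s t u = (u - t) / (u - s)` and
`b s t u = (t - s) / (u - s)`; for `s = 0` only `b` is determined, but then `X s = 0`. -/
lemma integral_pow_mul_interpolation (hmeas : ∀ t, Measurable (X t)) (hX : HasFiniteMoments μ X)
    (hX0 : ∀ ω, X 0 ω = 0) (hcov : HasMinCovariance μ X)
    {a b : ℝ → ℝ → ℝ → ℝ} (hLR : HasLinearRegression μ X a b)
    {s t u r : ℝ} (hs : 0 ≤ s) (hst : s < t) (htu : t < u) (hr : r = s ∨ r = u) (k : ℕ) :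
    (u - s) * ∫ ω, X r ω ^ k * X t ω ∂μ =
      (u - t) * ∫ ω, X r ω ^ k * X s ω ∂μ + (t - s) * ∫ ω, X r ω ^ k * X u ω ∂μ := by
  have ht := hs.trans hst.le
  have hu := ht.trans htu.le
  have cov : ∀ {p q : ℝ}, 0 ≤ p → p ≤ q → ∫ ω, X p ω ^ 1 * X q ω ∂μ = p := fun {p q} hp hpq => by
    simpa [mul_comm, min_eq_right hpq] using hcov p q hp (hp.trans hpq)
  have cov' : ∀ {p q : ℝ}, 0 ≤ q → q ≤ p → ∫ ω, X p ω ^ 1 * X q ω ∂μ = q := fun {p q} hq hqp => by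
    simpa [min_eq_right hqp] using hcov q p hq (hq.trans hqp)
  have e_s := integral_pow_mul_eq_of_linearRegression hmeas hX hLR hs hst htu (Or.inl rfl) 1
  have e_u := integral_pow_mul_eq_of_linearRegression hmeas hX hLR hs hst htu (Or.inr rfl) 1
  rw [cov hs hst.le, cov hs le_rfl, cov hs (hst.le.trans htu.le)] at e_s
  rw [cov' ht htu.le, cov' hs (hst.le.trans htu.le), cov hu le_rfl] at e_u
  have hb : (u - s) * b s t u = t - s := by linear_combination e_s - e_u
  have ha : (u - s) * a s t u * ∫ ω, X r ω ^ k * X s ω ∂μ =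
      (u - t) * ∫ ω, X r ω ^ k * X s ω ∂μ := by
    rcases hs.eq_or_lt with rfl | hs
    · simp [hX0]
    · have hab : a s t u + b s t u = 1 := by
        apply mul_right_cancel₀ hs.ne'
        linear_combination -e_s
      linear_combination (∫ ω, X r ω ^ k * X s ω ∂μ) * ((u - s) * hab - hb)
  rw [integral_pow_mul_eq_of_linearRegression hmeas hX hLR hs hst htu hr k]
  linear_combination ha + (∫ ω, X r ω ^ k * X u ω ∂μ) * hb

/-- By (LR), `u ↦ E[X_s^k X_u]` is affine on `[s, ∞)`; being `O(√u)`, it is constant. -/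
lemma integral_pow_mul_of_lt (hmeas : ∀ t, Measurable (X t)) (hX : HasFiniteMoments μ X)
    (hX0 : ∀ ω, X 0 ω = 0) (hcov : HasMinCovariance μ X)
    {a b : ℝ → ℝ → ℝ → ℝ} (hLR : HasLinearRegression μ X a b)
    {s t : ℝ} (hs : 0 ≤ s) (hst : s < t) (k : ℕ) :
    ∫ ω, X s ω ^ k * X t ω ∂μ = ∫ ω, X s ω ^ (k + 1) ∂μ := by
  set ψ : ℝ → ℝ := fun u => ∫ ω, X s ω ^ k * X u ω ∂μ
  set C := ∫ ω, X s ω ^ (k + 1) ∂μ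
  suffices ψ t - C = 0 by linarith
  refine eq_zero_of_abs_mul_add_le_sqrt (c := t * C - s * ψ t)
    (D := (t - s) * ((∫ ω, X s ω ^ (2 * k) ∂μ + 1) / 2)) ?_
  filter_upwards [eventually_gt_atTop t] with u htu
  have hrel := integral_pow_mul_interpolation hmeas hX hX0 hcov hLR hs hst htu (Or.inl rfl) k
  simp only [← pow_succ] at hrel
  have : (ψ t - C) * u + (t * C - s * ψ t) = (t - s) * ψ u := by
    linear_combination hrel
  rw [this, abs_mul, abs_of_pos (sub_pos.2 hst), mul_assoc]
  exact mul_le_mul_of_nonneg_left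
    (abs_integral_pow_mul_le hX hcov hs (hs.trans_lt (hst.trans htu)) k) (sub_nonneg.2 hst.le)

lemma mul_integral_pow_mul_of_lt (hmeas : ∀ t, Measurable (X t)) (hX : HasFiniteMoments μ X)
    (hX0 : ∀ ω, X 0 ω = 0) (hcov : HasMinCovariance μ X)
    {a b : ℝ → ℝ → ℝ → ℝ} (hLR : HasLinearRegression μ X a b)
    {s t : ℝ} (hs : 0 ≤ s) (hst : s < t) (k : ℕ) :
    t * ∫ ω, X t ω ^ k * X s ω ∂μ = s * ∫ ω, X t ω ^ (k + 1) ∂μ := by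
  rcases hs.eq_or_lt with rfl | hs
  · simp [hX0]
  · have := integral_pow_mul_interpolation hmeas hX hX0 hcov hLR le_rfl hs hst (Or.inr rfl) k
    simpa [hX0, ← pow_succ] using this

lemma integral_pow_three (hmeas : ∀ t, Measurable (X t)) (hX : HasFiniteMoments μ X)
    (hX0 : ∀ ω, X 0 ω = 0) (hmean : ∀ t : ℝ, 0 ≤ t → ∫ ω, X t ω ∂μ = 0)
    (hcov : HasMinCovariance μ X)
    {a b : ℝ → ℝ → ℝ → ℝ} (hLR : HasLinearRegression μ X a b)
    (hCV : HasQuadraticConditionalVariance μ X) {θ τ : ℝ} (hτ : 0 ≤ τ)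
    (hfut : HasQuadraticBackwardRegression μ X θ τ)
    {t : ℝ} (ht : 0 ≤ t) : ∫ ω, X t ω ^ 3 ∂μ = t * θ := by
  rcases ht.eq_or_lt with rfl | ht
  · simp [hX0]
  set s := t / 2
  have hs : 0 < s := half_pos ht
  have hst : s < t := half_lt_self ht
  have h_cv := integral_pow_mul_sq_of_conditionalVariance hmeas hX hCV hs.le hst.le 1
  have h_bwd := mul_integral_pow_mul_of_lt hmeas hX hX0 hcov hLR hs.le hst 2
  have h_fwd := integral_pow_mul_of_lt hmeas hX hX0 hcov hLR hs.le hst 2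
  have h_fut := integral_pow_mul_sq_of_backwardRegression hmeas hX hfut hs hst 1
  simp only [pow_one, hmean s hs.le, hmean t ht.le, mul_zero, add_zero] at h_cv h_fut
  rw [integral_sq_of_covariance hcov ht.le] at h_fut
  rw [show ∫ ω, X t ω ^ 2 * X s ω ∂μ = ∫ ω, X s ω * X t ω ^ 2 ∂μ by simp only [mul_comm],
    h_cv] at h_bwd
  rw [show ∫ ω, X t ω * X s ω ^ 2 ∂μ = ∫ ω, X s ω ^ 2 * X t ω ∂μ by simp only [mul_comm],
    h_fwd] at h_fut
  have htτ : 0 < t + τ := by linarith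
  field_simp at h_fut
  have hpos : 0 < s * (t - s) := mul_pos hs (sub_pos.2 hst)
  apply mul_left_cancel₀ hpos.ne'
  linear_combination h_fut - (t + τ) * h_bwd

lemma exists_integral_pow_four (hmeas : ∀ t, Measurable (X t)) (hX : HasFiniteMoments μ X)
    (hX0 : ∀ ω, X 0 ω = 0) (hcov : HasMinCovariance μ X)
    (hCV : HasQuadraticConditionalVariance μ X) {θ τ : ℝ} (hτ : 0 ≤ τ)
    (hfut : HasQuadraticBackwardRegression μ X θ τ)
    (h3 : ∀ t : ℝ, 0 ≤ t → ∫ ω, X t ω ^ 3 ∂μ = t * θ) :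
    ∃ q : ℝ, ∀ t : ℝ, 0 ≤ t → ∫ ω, X t ω ^ 4 ∂μ = (1 + q) * t * (t + τ) + t * (t + θ ^ 2) := by
  set φ : ℝ → ℝ := fun t => (∫ ω, X t ω ^ 4 ∂μ - t * (t + θ ^ 2)) / (t * (t + τ)) with hφ
  have hφ_eq : ∀ s t : ℝ, 0 < s → s < t → φ s = φ t := by
    intro s t hs hst
    have ht := hs.trans hst
    have h_cv := integral_pow_mul_sq_of_conditionalVariance hmeas hX hCV hs.le hst.le 2
    have h_fut := integral_pow_mul_sq_of_backwardRegression hmeas hX hfut hs hst 2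
    rw [show ∫ ω, X t ω ^ 2 * X s ω ^ 2 ∂μ = ∫ ω, X s ω ^ 2 * X t ω ^ 2 ∂μ by
      simp only [mul_comm], h_cv, integral_sq_of_covariance hcov hs.le, h3 t ht.le,
      integral_sq_of_covariance hcov ht.le] at h_fut
    have hsτ : 0 < s + τ := by linarith
    have htτ : 0 < t + τ := by linarith
    simp only [hφ]
    rw [div_eq_div_iff (by positivity) (by positivity)]
    field_simp at h_fut
    linear_combination h_fut
  refine ⟨φ 1 - 1, fun t ht => ?_⟩
  rcases ht.eq_or_lt with rfl | ht
  · simp [hX0]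
  have hφt : φ t = φ 1 := by
    rcases lt_trichotomy t 1 with h | rfl | h
    · exact hφ_eq t 1 ht h
    · rfl
    · exact (hφ_eq 1 t one_pos h).symm
  have htτ : 0 < t + τ := by linarith
  rw [add_sub_cancel, ← hφt, hφ]
  field_simp
  ring

lemma integral_sub_pow_three (hmeas : ∀ t, Measurable (X t)) (hX : HasFiniteMoments μ X)
    (hX0 : ∀ ω, X 0 ω = 0) (hmean : ∀ t : ℝ, 0 ≤ t → ∫ ω, X t ω ∂μ = 0)
    (hcov : HasMinCovariance μ X)
    {a b : ℝ → ℝ → ℝ → ℝ} (hLR : HasLinearRegression μ X a b)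
    (hCV : HasQuadraticConditionalVariance μ X) {θ : ℝ}
    (h3 : ∀ t : ℝ, 0 ≤ t → ∫ ω, X t ω ^ 3 ∂μ = t * θ)
    {s t : ℝ} (hs : 0 ≤ s) (hst : s < t) : ∫ ω, (X t ω - X s ω) ^ 3 ∂μ = θ * (t - s) := by
  have ht := hs.trans hst.le
  have := hX t ht 3
  have := hX s hs 3
  have := hX.integrable_pow_mul hs ht 2
  have : Integrable (fun ω => X s ω * X t ω ^ 2) μ := by
    simpa using hX.integrable_pow_mul_pow hs ht 1 2
  have h_cv := integral_pow_mul_sq_of_conditionalVariance hmeas hX hCV hs hst.le 1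
  simp only [pow_one, hmean s hs, mul_zero, add_zero] at h_cv
  calc ∫ ω, (X t ω - X s ω) ^ 3 ∂μ
      = ∫ ω, (X t ω ^ 3 - 3 * (X s ω * X t ω ^ 2) + 3 * (X s ω ^ 2 * X t ω) - X s ω ^ 3) ∂μ := by
        congr 1 with ω; ring
    _ = ∫ ω, X t ω ^ 3 ∂μ - 3 * ∫ ω, X s ω * X t ω ^ 2 ∂μ +
          3 * ∫ ω, X s ω ^ 2 * X t ω ∂μ - ∫ ω, X s ω ^ 3 ∂μ := by
        rw [integral_sub (by fun_prop) (by fun_prop), integral_add (by fun_prop) (by fun_prop),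
          integral_sub (by fun_prop) (by fun_prop), integral_const_mul, integral_const_mul]
    _ = θ * (t - s) := by
        rw [h_cv, integral_pow_mul_of_lt hmeas hX hX0 hcov hLR hs hst 2, h3 t ht, h3 s hs]
        ring

lemma integral_sub_pow_four (hmeas : ∀ t, Measurable (X t)) (hX : HasFiniteMoments μ X)
    (hX0 : ∀ ω, X 0 ω = 0) (hcov : HasMinCovariance μ X)
    {a b : ℝ → ℝ → ℝ → ℝ} (hLR : HasLinearRegression μ X a b)
    (hCV : HasQuadraticConditionalVariance μ X) {θ τ q : ℝ}
    (h4 : ∀ t : ℝ, 0 ≤ t → ∫ ω, X t ω ^ 4 ∂μ = (1 + q) * t * (t + τ) + t * (t + θ ^ 2))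
    {s t : ℝ} (hs : 0 ≤ s) (hst : s < t) :
    ∫ ω, (X t ω - X s ω) ^ 4 ∂μ = (t - s) * (6 * s + θ ^ 2 - τ + (2 + q) * (t + τ - 3 * s)) := by
  have ht := hs.trans hst.le
  have := hX t ht 4
  have := hX s hs 4
  have := hX.integrable_pow_mul ht hs 3
  have := hX.integrable_pow_mul hs ht 3
  have := hX.integrable_pow_mul_pow hs ht 2 2
  have h_bwd := mul_integral_pow_mul_of_lt hmeas hX hX0 hcov hLR hs hst 3
  have h_cv := integral_pow_mul_sq_of_conditionalVariance hmeas hX hCV hs hst.le 2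
  rw [integral_sq_of_covariance hcov hs] at h_cv
  have h_fwd := integral_pow_mul_of_lt hmeas hX hX0 hcov hLR hs hst 3
  have h_exp : ∫ ω, (X t ω - X s ω) ^ 4 ∂μ = ∫ ω, X t ω ^ 4 ∂μ -
      4 * ∫ ω, X t ω ^ 3 * X s ω ∂μ + 6 * ∫ ω, X s ω ^ 2 * X t ω ^ 2 ∂μ -
        4 * ∫ ω, X s ω ^ 3 * X t ω ∂μ + ∫ ω, X s ω ^ 4 ∂μ := by
    rw [← integral_const_mul, ← integral_const_mul, ← integral_const_mul,
      ← integral_sub (by fun_prop) (by fun_prop), ← integral_add (by fun_prop) (by fun_prop),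
      ← integral_sub (by fun_prop) (by fun_prop), ← integral_add (by fun_prop) (by fun_prop)]
    congr 1 with ω
    ring
  rw [h4 t ht] at h_bwd
  rw [h_cv, h_fwd, h4 s hs, h4 t ht] at h_exp
  apply mul_left_cancel₀ (hs.trans_lt hst).ne'
  linear_combination t * h_exp - 4 * h_bwd

end Moments

theorem stmt6 {Ω : Type*} [MeasurableSpace Ω] (μ : Measure Ω) [IsProbabilityMeasure μ]
    (X : ℝ → Ω → ℝ) (hmeas : ∀ t, Measurable (X t))
    (hX0 : ∀ ω, X 0 ω = 0)
    (hmom : ∀ t : ℝ, 0 ≤ t → ∀ p : ℝ, 0 < p → Integrable (fun ω => |X t ω| ^ p) μ)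
    (hmean : ∀ t : ℝ, 0 ≤ t → ∫ ω, X t ω ∂μ = 0)
    (hcov : ∀ s t : ℝ, 0 ≤ s → 0 ≤ t → ∫ ω, X t ω * X s ω ∂μ = min t s)
    (a b : ℝ → ℝ → ℝ → ℝ)
    (hLR : ∀ s t u : ℝ, 0 ≤ s → s < t → t < u →
      μ[X t | sigmaLE X s ⊔ sigmaGE X u] =ᵐ[μ]
        fun ω => a s t u * X s ω + b s t u * X u ω)
    (hCV : ∀ s t : ℝ, 0 ≤ s → s ≤ t →
      μ[fun ω => (X t ω) ^ 2 | sigmaLE X s] =ᵐ[μ] fun ω => (X s ω) ^ 2 + t - s)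
    (hindep : ∀ t : ℝ, 0 < t → LinIndep123 μ (X t))
    (θ τ : ℝ) (hτ : 0 ≤ τ)
    (hfut : ∀ s t : ℝ, 0 < s → s < t →
      μ[fun ω => (X s ω) ^ 2 | sigmaGE X t] =ᵐ[μ]
        fun ω => s * (s + τ) / (t * (t + τ)) * (X t ω) ^ 2 +
          s * (t - s) * θ / (t * (t + τ)) * X t ω + s * (t - s) / (t + τ)) :
    (∀ t : ℝ, 0 ≤ t → ∫ ω, (X t ω) ^ 3 ∂μ = t * θ) ∧
    ∃ q : ℝ, -1 < q ∧ q ≤ 1 ∧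
      ∀ s t : ℝ, 0 ≤ s → s < t →
        (∫ ω, (X t ω) ^ 4 ∂μ = (1 + q) * t * (t + τ) + t * (t + θ ^ 2)) ∧
        (∫ ω, (X t ω - X s ω) ^ 2 ∂μ = t - s) ∧
        (∫ ω, (X t ω - X s ω) ^ 3 ∂μ = θ * (t - s)) ∧
        (∫ ω, (X t ω - X s ω) ^ 4 ∂μ =
          (t - s) * (6 * s + θ ^ 2 - τ + (2 + q) * (t + τ - 3 * s))) := by
  have hX : HasFiniteMoments μ X := fun t ht =>
    integrable_pow_of_integrable_abs_rpow (hmeas t).aestronglyMeasurable (hmom t ht)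
  have h3 t (ht : 0 ≤ t) := integral_pow_three hmeas hX hX0 hmean hcov hLR hCV hτ hfut ht
  obtain ⟨q, h4⟩ := exists_integral_pow_four hmeas hX hX0 hcov hCV hτ hfut h3
  have h_incr4 {s t} := integral_sub_pow_four (s := s) (t := t) hmeas hX hX0 hcov hLR hCV h4
  have hq_gt : -1 < q := by
    have := integral_sq_pos_of_linIndep123 (hindep 1 one_pos) (hX 1 zero_le_one) θ 1
    rw [integral_sq_sub_mul_sub hX hmean hcov h3 h4 zero_le_one] at this
    nlinarith
  have hq_le : q ≤ 1 := by
    have := nonneg_of_forall_nonneg_mul_add (m := 2 * (1 - q))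
      (c := θ ^ 2 - τ + (2 + q) * (1 + τ)) fun s hs => by
        have h := h_incr4 hs (lt_add_one s)
        have : 0 ≤ ∫ ω, (X (s + 1) ω - X s ω) ^ 4 ∂μ := integral_nonneg fun ω => by positivity
        linear_combination this + h
    linarith
  refine ⟨h3, q, hq_gt, hq_le, fun s t hs hst => ⟨h4 t (hs.trans hst.le), ?_, ?_, h_incr4 hs hst⟩⟩
  · exact integral_sub_sq hX hcov hs hst.le
  · exact integral_sub_pow_three hmeas hX hX0 hmean hcov hLR hCV h3 hs hst
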